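/- Let N be a positive integer. Then for every integer n: Σ_k^n sin(π/(2N)) · |sin((2k−1)π/(2N))| = ⌊n/N⌋ + (1/2) · ( 1 − (−1)^{⌊n/N⌋} · cos(nπ/N) ), where the left-hand side is the bidirectional sum and ⌊·⌋ is the floor function. -/

import Mathlib

/-- Bidirectional sum: `Σ_k^n x_k = Σ_{k=1}^n x_k` for `n ≥ 1`, `0` for `n = 0`, and
`−Σ_{k=n+1}^0 x_k` for `n ≤ −1`. -/
noncomputable def bsum (x : ℤ → ℝ) (n : ℤ) : ℝ :=
  if 1 ≤ n then ∑ k ∈ Finset.Icc (1:ℤ) n, x k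
  else if n = 0 then 0
  else -∑ k ∈ Finset.Icc (n+1) (0:ℤ), x k

/-!
At `n = N q + r` with `0 ≤ r ≤ N` the right-hand side equals `q + (1 - cos (r π / N)) / 2`;
at `r = N` this agrees with the value computed from `(q + 1, 0)`. So writing `n - 1 = N q + s`
with `0 ≤ s < N`, both `n - 1` and `n` can be expanded with the same `q`, and the increment is
`(cos (s π / N) - cos ((s + 1) π / N)) / 2 = sin (π / (2N)) sin ((2s + 1) π / (2N))`. This is the
summand at `n`, because `|sin|` is `π`-periodic and `(2s + 1) π / (2N) ∈ [0, π]`. Both sides of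
the identity vanish at `0` and have the same increments.
-/

open Real

lemma bsum_add_one (x : ℤ → ℝ) (n : ℤ) : bsum x (n + 1) = bsum x n + x (n + 1) := by
  unfold bsum
  rcases lt_trichotomy n (-1) with hn | rfl | hn
  · rw [if_neg (by omega), if_neg (by omega), if_neg (by omega), if_neg (by omega),
      ← Finset.insert_Icc_succ_left_eq_Icc (show n + 1 ≤ 0 by omega), Order.succ_eq_add_one,
      Finset.sum_insert (by simp), add_assoc]
    ring
  · norm_num
  · rcases eq_or_lt_of_le (show 0 ≤ n by omega) with rfl | hn
    · norm_num
    · rw [if_pos (by omega), if_pos (by omega), ← Order.succ_eq_add_one,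
        ← Finset.insert_Icc_right_eq_Icc_succ (by rw [Order.succ_eq_add_one]; omega),
        Finset.sum_insert (by simp), add_comm]

lemma bsum_eq_of_sub_one {x F : ℤ → ℝ} (h₀ : F 0 = 0) (hF : ∀ n, F n - F (n - 1) = x n)
    (n : ℤ) : bsum x n = F n := by
  induction n using Int.induction_on with
  | zero => simp [bsum, h₀]
  | succ i ih =>
    have := hF (i + 1)
    rw [add_sub_cancel_right] at this
    rw [bsum_add_one, ih]
    linarith
  | pred i ih =>
    have := bsum_add_one x (-i - 1)
    rw [sub_add_cancel, ih] at this
    have := hF (-i)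
    linarith

lemma abs_sin_add_int_mul_pi (x : ℝ) (m : ℤ) : |sin (x + m * π)| = |sin x| := by
  rw [sin_add_int_mul_pi, abs_mul, abs_neg_one_zpow, one_mul]

noncomputable def accumulatedArea (N : ℕ) (n : ℤ) : ℝ :=
  (Int.fdiv n N : ℝ) + (1 / 2) * (1 - (-1 : ℝ) ^ (Int.fdiv n N) * cos (n * π / N))

lemma accumulatedArea_of_eq_mul_add_of_lt {N : ℕ} {n q r : ℤ} (hn : n = N * q + r) (hr₀ : 0 ≤ r)
    (hrN : r < N) : accumulatedArea N n = q + (1 - cos (r * π / N)) / 2 := by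
  have hN : (N : ℤ) ≠ 0 := by omega
  have hN' : (N : ℝ) ≠ 0 := by exact_mod_cast hN
  have hfdiv : n.fdiv N = q := by
    rw [Int.fdiv_eq_ediv_of_nonneg _ (by positivity), hn, Int.mul_add_ediv_left _ _ hN,
      Int.ediv_eq_zero_of_lt hr₀ hrN, add_zero]
  have hangle : (n : ℝ) * π / N = r * π / N + q * π := by
    rw [hn]; push_cast; field_simp; ring
  have hsq : (-1 : ℝ) ^ q * (-1) ^ q = 1 := by rw [← mul_zpow]; norm_num
  rw [accumulatedArea, hfdiv, hangle, cos_add_int_mul_pi, ← mul_assoc, hsq, one_mul]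
  ring

section accumulatedArea

variable {N : ℕ} (hN : 0 < N)
include hN

lemma accumulatedArea_of_eq_mul_add {n q r : ℤ} (hn : n = N * q + r) (hr₀ : 0 ≤ r)
    (hrN : r ≤ N) : accumulatedArea N n = q + (1 - cos (r * π / N)) / 2 := by
  rcases hrN.lt_or_eq with hrN | rfl
  · exact accumulatedArea_of_eq_mul_add_of_lt hn hr₀ hrN
  · rw [accumulatedArea_of_eq_mul_add_of_lt (N := N) (q := q + 1) (r := 0) (by rw [hn]; ring) le_rfl
      (by positivity)]
    have : ((N : ℤ) : ℝ) * π / N = π := by push_cast; field_simp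
    rw [this, cos_pi]
    push_cast
    rw [zero_mul, zero_div, cos_zero]
    ring

lemma accumulatedArea_sub_accumulatedArea_sub_one (n : ℤ) :
    accumulatedArea N n - accumulatedArea N (n - 1)
      = sin (π / (2 * N)) * |sin ((2 * n - 1) * π / (2 * N))| := by
  set m := (n - 1).fdiv N
  set s := (n - 1).fmod N
  have hdecomp : N * m + s = n - 1 := Int.mul_fdiv_add_fmod _ _
  have hs₀ : 0 ≤ s := Int.fmod_nonneg_of_pos _ (by positivity)
  have hsN : s < N := Int.fmod_lt_of_pos _ (by positivity)
  have hangle : (2 * n - 1) * π / (2 * N) = (2 * s + 1) * π / (2 * N) + m * π := by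
    rw [show (n : ℝ) = N * m + s + 1 by exact_mod_cast (by omega : n = N * m + s + 1)]
    field_simp; ring
  have hsin_nonneg : 0 ≤ sin ((2 * s + 1) * π / (2 * N)) := by
    have : (s : ℝ) + 1 ≤ N := by exact_mod_cast hsN
    apply sin_nonneg_of_nonneg_of_le_pi (by positivity)
    rw [div_le_iff₀ (by positivity)]
    nlinarith [pi_pos]
  rw [accumulatedArea_of_eq_mul_add hN (q := m) (r := s + 1) (by omega) (by omega) (by omega),
    accumulatedArea_of_eq_mul_add hN hdecomp.symm hs₀ hsN.le, hangle, abs_sin_add_int_mul_pi,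
    abs_of_nonneg hsin_nonneg]
  have := two_mul_sin_mul_sin ((2 * s + 1) * π / (2 * N)) (π / (2 * N))
  push_cast
  rw [show (2 * s + 1) * π / (2 * N) - π / (2 * N) = s * π / N by field_simp; ring,
    show (2 * s + 1) * π / (2 * N) + π / (2 * N) = (s + 1) * π / N by field_simp; ring] at this
  linarith

end accumulatedArea

/-- The summation identity
`Σ_k^n sin(π/(2N)) |sin((2k−1)π/(2N))| = ⌊n/N⌋ + (1/2)(1 − (−1)^{⌊n/N⌋} cos(nπ/N))`,
where `⌊n/N⌋` is floor division of integers. -/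
theorem stmt17 (N : ℕ) (hN : 0 < N) :
    ∀ n : ℤ,
      bsum (fun k =>
        Real.sin (Real.pi / (2 * N)) * |Real.sin ((2 * (k:ℝ) - 1) * Real.pi / (2 * N))|) n
      = (Int.fdiv n N : ℝ)
        + (1 / 2) * (1 - (-1 : ℝ) ^ (Int.fdiv n N) * Real.cos (n * Real.pi / N)) :=
  bsum_eq_of_sub_one (F := accumulatedArea N) (by simp [accumulatedArea])
    (accumulatedArea_sub_accumulatedArea_sub_one hN)
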